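/- Let μ₁, μ₂ be real constants, U ⊆ ℂ open, and f, g : U → ℂ smooth functions with f nonvanishing on U. Define ψ⁰ = f·g, ψ¹ = (1/2)·f·(1+g²), ψ² = (i/2)·f·(1−g²). If ψ⁰, ψ¹, ψ² satisfy the system (HME): ψ⁰_z̄ = μ₁·conj(ψ⁰)·ψ², ψ¹_z̄ = μ₂·conj(ψ¹)·ψ², ψ²_z̄ = μ₁|ψ⁰|² − μ₂|ψ¹|² on U, then f and g satisfy on U: f_z̄ = −i·|f|²·(μ₁|g|² − (μ₂/2)(1 + ḡ²)) and g_z̄ = (i/2)·f̄·(μ₁·ḡ·(1+g²) − μ₂·g·(1+ḡ²)), where f̄, ḡ denote complex conjugates. -/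

import Mathlib

open Complex

/-- The Wirtinger derivative `φ_z = (φ_u − i·φ_v)/2`. -/
noncomputable def wirtZ (φ : ℂ → ℂ) (z : ℂ) : ℂ :=
  (fderiv ℝ φ z 1 - Complex.I * fderiv ℝ φ z Complex.I) / 2

/-- The conjugate Wirtinger derivative `φ_z̄ = (φ_u + i·φ_v)/2`. -/
noncomputable def wirtZBar (φ : ℂ → ℂ) (z : ℂ) : ℂ :=
  (fderiv ℝ φ z 1 + Complex.I * fderiv ℝ φ z Complex.I) / 2

lemma wirtZBar_mul (f g : ℂ → ℂ) (z : ℂ) (hf : DifferentiableAt ℝ f z)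
    (hg : DifferentiableAt ℝ g z) :
    wirtZBar (fun w => f w * g w) z = wirtZBar f z * g z + f z * wirtZBar g z := by
  unfold wirtZBar
  rw [fderiv_fun_mul hf hg]
  simp only [ContinuousLinearMap.add_apply, ContinuousLinearMap.smul_apply, smul_eq_mul]
  ring

lemma wirtZBar_const_mul (c : ℂ) (f : ℂ → ℂ) (z : ℂ) (hf : DifferentiableAt ℝ f z) :
    wirtZBar (fun w => c * f w) z = c * wirtZBar f z := by
  unfold wirtZBar
  rw [fderiv_const_mul hf]
  simp only [ContinuousLinearMap.smul_apply, smul_eq_mul]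
  ring

lemma wirtZBar_const_add (c : ℂ) (f : ℂ → ℂ) (z : ℂ) :
    wirtZBar (fun w => c + f w) z = wirtZBar f z := by
  unfold wirtZBar
  rw [fderiv_const_add]

lemma abs_sq_eq (w : ℂ) : ((‖w‖ : ℂ)) ^ 2 = w * (starRingEnd ℂ) w := by
  rw [← Complex.ofReal_pow, Complex.sq_norm, Complex.mul_conj]

/-- If the Weierstrass-type data `ψ⁰ = fg`, `ψ¹ = ½f(1+g²)`, `ψ² = (i/2)f(1−g²)`
satisfy the system (HME), then the Weierstrass data `(f,g)` satisfy the structure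
equations `f_z̄ = −i|f|²(μ₁|g|² − (μ₂/2)(1+ḡ²))` and
`g_z̄ = (i/2)f̄(μ₁ḡ(1+g²) − μ₂g(1+ḡ²))`. -/
theorem weierstrass_data_structure_equations (μ₁ μ₂ : ℝ) (U : Set ℂ) (hU : IsOpen U)
    (f g : ℂ → ℂ) (hf : ContDiffOn ℝ (⊤ : ℕ∞) f U) (hg : ContDiffOn ℝ (⊤ : ℕ∞) g U)
    (hf0 : ∀ z ∈ U, f z ≠ 0) :
    let ψ0 : ℂ → ℂ := fun z => f z * g z
    let ψ1 : ℂ → ℂ := fun z => (1 / 2) * f z * (1 + g z ^ 2)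
    let ψ2 : ℂ → ℂ := fun z => (Complex.I / 2) * f z * (1 - g z ^ 2)
    (∀ z ∈ U,
      wirtZBar ψ0 z = (μ₁ : ℂ) * (starRingEnd ℂ) (ψ0 z) * ψ2 z ∧
      wirtZBar ψ1 z = (μ₂ : ℂ) * (starRingEnd ℂ) (ψ1 z) * ψ2 z ∧
      wirtZBar ψ2 z =
        (μ₁ : ℂ) * (‖ψ0 z‖ : ℂ) ^ 2 - (μ₂ : ℂ) * (‖ψ1 z‖ : ℂ) ^ 2) →
    ∀ z ∈ U,
      wirtZBar f z = -Complex.I * (‖f z‖ : ℂ) ^ 2 *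
          ((μ₁ : ℂ) * (‖g z‖ : ℂ) ^ 2
            - ((μ₂ : ℂ) / 2) * (1 + (starRingEnd ℂ) (g z) ^ 2)) ∧
      wirtZBar g z = (Complex.I / 2) * (starRingEnd ℂ) (f z) *
          ((μ₁ : ℂ) * (starRingEnd ℂ) (g z) * (1 + g z ^ 2)
            - (μ₂ : ℂ) * g z * (1 + (starRingEnd ℂ) (g z) ^ 2)) := by
  intro ψ0 ψ1 ψ2 hHME z hz
  obtain ⟨h0, h1, h2⟩ := hHME z hz
  have hzU : U ∈ nhds z := hU.mem_nhds hz
  have hf' : DifferentiableAt ℝ f z :=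
    ((hf.contDiffAt hzU).differentiableAt (by simp))
  have hg' : DifferentiableAt ℝ g z :=
    ((hg.contDiffAt hzU).differentiableAt (by simp))
  set F := wirtZBar f z with hF
  set G := wirtZBar g z with hG
  -- derivative of 1 + g^2 and 1 - g^2
  have hgg : DifferentiableAt ℝ (fun w => g w * g w) z := hg'.mul hg'
  have hsq : wirtZBar (fun w => g w * g w) z = 2 * g z * G := by
    rw [wirtZBar_mul g g z hg' hg']; ring
  have hP : wirtZBar (fun w => 1 + g w ^ 2) z = 2 * g z * G := by
    have : (fun w => 1 + g w ^ 2) = fun w => (1 : ℂ) + g w * g w := by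
      funext w; ring
    rw [this, wirtZBar_const_add, hsq]
  have hM : wirtZBar (fun w => 1 - g w ^ 2) z = -(2 * g z * G) := by
    have : (fun w => 1 - g w ^ 2) = fun w => (1 : ℂ) + (-1) * (g w * g w) := by
      funext w; ring
    rw [this, wirtZBar_const_add, wirtZBar_const_mul _ _ _ hgg, hsq]; ring
  have hPd : DifferentiableAt ℝ (fun w => 1 + g w ^ 2) z := by
    have : (fun w => 1 + g w ^ 2) = fun w => (1 : ℂ) + g w * g w := by
      funext w; ring
    rw [this]; exact (differentiableAt_const _).add hgg
  have hMd : DifferentiableAt ℝ (fun w => 1 - g w ^ 2) z := by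
    have : (fun w => 1 - g w ^ 2) = fun w => (1 : ℂ) - g w * g w := by
      funext w; ring
    rw [this]; exact (differentiableAt_const _).sub hgg
  -- compute wirtZBar of ψ0, ψ1, ψ2
  have e0 : wirtZBar ψ0 z = F * g z + f z * G := by
    rw [show ψ0 = fun w => f w * g w from rfl, wirtZBar_mul f g z hf' hg']
  have e1 : wirtZBar ψ1 z
      = (1 / 2 * F) * (1 + g z ^ 2) + (1 / 2 * f z) * (2 * g z * G) := by
    have hfun : ψ1 = fun w => ((1 / 2 : ℂ) * f w) * (1 + g w ^ 2) := by
      funext w; show (1 / 2 : ℂ) * f w * (1 + g w ^ 2) = _; ring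
    rw [hfun, wirtZBar_mul _ _ z (hf'.const_mul _) hPd,
      wirtZBar_const_mul _ _ _ hf', hP]
  have e2 : wirtZBar ψ2 z
      = (Complex.I / 2 * F) * (1 - g z ^ 2)
        + (Complex.I / 2 * f z) * (-(2 * g z * G)) := by
    have hfun : ψ2 = fun w => ((Complex.I / 2 : ℂ) * f w) * (1 - g w ^ 2) := by
      funext w; show (Complex.I / 2 : ℂ) * f w * (1 - g w ^ 2) = _; ring
    rw [hfun, wirtZBar_mul _ _ z (hf'.const_mul _) hMd,
      wirtZBar_const_mul _ _ _ hf', hM]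
  rw [e0] at h0
  rw [e1] at h1
  rw [e2, abs_sq_eq (ψ0 z), abs_sq_eq (ψ1 z)] at h2
  have hψ0 : ψ0 z = f z * g z := rfl
  have hψ1 : ψ1 z = (1 / 2) * f z * (1 + g z ^ 2) := rfl
  have hψ2 : ψ2 z = (Complex.I / 2) * f z * (1 - g z ^ 2) := rfl
  simp only [hψ0, hψ1, hψ2] at h0 h1 h2
  simp only [hψ0, hψ1, hψ2, map_mul, map_add, map_sub, map_one, map_pow, map_div₀,
    map_ofNat, Complex.conj_I] at h0 h1 h2
  simp only [abs_sq_eq]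
  constructor
  · linear_combination (norm := (ring_nf; try simp only [Complex.I_sq]; try ring1)) h1 - Complex.I * h2
  · have hfz := hf0 z hz
    rw [← sub_eq_zero]
    have key : f z * (G - Complex.I / 2 * (starRingEnd ℂ) (f z) *
        ((μ₁ : ℂ) * (starRingEnd ℂ) (g z) * (1 + g z ^ 2)
          - (μ₂ : ℂ) * g z * (1 + (starRingEnd ℂ) (g z) ^ 2))) = 0 := by
      have hFval : F = -Complex.I * (f z * (starRingEnd ℂ) (f z)) *
          ((μ₁ : ℂ) * (g z * (starRingEnd ℂ) (g z))
            - ((μ₂ : ℂ) / 2) * (1 + (starRingEnd ℂ) (g z) ^ 2)) := by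
        linear_combination (norm := (ring_nf; try simp only [Complex.I_sq]; try ring1)) h1 - Complex.I * h2
      linear_combination (norm := (ring_nf)) h0 - g z * hFval
    rcases mul_eq_zero.1 key with h | h
    · exact absurd h hfz
    · exact h
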